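/- arXiv:2503.05297 — 3 statements merged into one kernel-verified Lean document; each statement's English description precedes it below -/
import Mathlib

section
/- Combining the two previous results: if X₁,…,Xₙ are i.i.d. from P⁰, the kernel is bounded by 1, and θ̂ exactly minimizes θ ↦ D(P_θ, P̂ₙ), then E[D(P_{θ̂}, P⁰)] ≤ inf_{θ∈Θ} D(P_θ, P⁰) + 2/√n. -/
/-!
Write `m_θ`, `m₀` and `m̂ = n⁻¹ ∑ φ(Xᵢ)` for the mean embeddings of `P_θ`, `P⁰` and `P̂ₙ`, so that
`D` is the distance between them in `H`. Since `θ̂` minimises `‖m_θ - m̂‖`, two triangle inequalities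
give `‖m_{θ̂} - m₀‖ ≤ ‖m_θ - m₀‖ + 2 ‖m̂ - m₀‖` pointwise for every `θ`. The centred features
`φ(Xᵢ) - m₀` are independent with mean zero, hence orthogonal in `L²(Ω; H)`, so
`E ‖m̂ - m₀‖² = n⁻¹ E ‖φ(X₁) - m₀‖² ≤ 1 / n`, and Jensen gives `E ‖m̂ - m₀‖ ≤ 1 / √n`.
-/

open MeasureTheory ProbabilityTheory
open scoped RealInnerProductSpace

lemma norm_sub_le_add_two_mul_of_norm_sub_le {E : Type*} [SeminormedAddCommGroup E]
    {a b s m : E} (h : ‖a - s‖ ≤ ‖b - s‖) : ‖a - m‖ ≤ ‖b - m‖ + 2 * ‖s - m‖ := by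
  have h₁ := norm_sub_le_norm_sub_add_norm_sub a s m
  have h₂ := norm_sub_le_norm_sub_add_norm_sub b m s
  rw [norm_sub_rev m s] at h₂
  linarith

section Average

variable {E : Type*} {n : ℕ}

lemma inv_smul_sum_sub [AddCommGroup E] [Module ℝ E] (hn : n ≠ 0) (v : Fin n → E) (m : E) :
    (n : ℝ)⁻¹ • ∑ i, v i - m = (n : ℝ)⁻¹ • ∑ i, (v i - m) := by
  rw [Finset.sum_sub_distrib, smul_sub, Finset.sum_const, Finset.card_univ, Fintype.card_fin,
    ← Nat.cast_smul_eq_nsmul ℝ, inv_smul_smul₀ (Nat.cast_ne_zero.2 hn)]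

lemma norm_inv_smul_sum_le [SeminormedAddCommGroup E] [NormedSpace ℝ E] {v : Fin n → E}
    {C : ℝ} (hC : 0 ≤ C) (hv : ∀ i, ‖v i‖ ≤ C) : ‖(n : ℝ)⁻¹ • ∑ i, v i‖ ≤ C := by
  rcases Nat.eq_zero_or_pos n with rfl | hn
  · simpa using hC
  rw [norm_smul, norm_inv, Real.norm_natCast, inv_mul_le_iff₀ (by exact_mod_cast hn)]
  simpa using (norm_sum_le Finset.univ v).trans (Finset.sum_le_sum fun i _ => hv i)

end Average

section Moments

variable {α : Type*} [MeasurableSpace α] {μ : Measure α} [IsProbabilityMeasure μ]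

lemma integral_le_sqrt_integral_sq {f : α → ℝ} (hf : MemLp f 2 μ) :
    ∫ a, f a ∂μ ≤ √(∫ a, f a ^ 2 ∂μ) := by
  refine Real.le_sqrt_of_sq_le ?_
  have := variance_nonneg f μ
  rw [variance_eq_sub hf, sub_nonneg] at this
  simpa using this

variable {H : Type*} [NormedAddCommGroup H] [InnerProductSpace ℝ H] [CompleteSpace H]

lemma integral_norm_sub_integral_sq {f : α → H} (hf : Integrable f μ)
    (hf2 : Integrable (fun a => ‖f a‖ ^ 2) μ) :
    ∫ a, ‖f a - ∫ b, f b ∂μ‖ ^ 2 ∂μ = ∫ a, ‖f a‖ ^ 2 ∂μ - ‖∫ a, f a ∂μ‖ ^ 2 := by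
  set m := ∫ b, f b ∂μ
  have hinner : Integrable (fun a => 2 * ⟪m, f a⟫) μ := (hf.const_inner m).const_mul 2
  simp_rw [norm_sub_sq_real, real_inner_comm m]
  rw [integral_add (f := fun a => ‖f a‖ ^ 2 - 2 * ⟪m, f a⟫) (hf2.sub hinner) (integrable_const _),
    integral_sub hf2 hinner, integral_const_mul, integral_inner hf, integral_const,
    real_inner_self_eq_norm_sq]
  simp only [probReal_univ, one_smul]
  ring

lemma integral_norm_sub_integral_sq_le {f : α → H} (hf : StronglyMeasurable f) {C : ℝ}
    (hC : ∀ a, ‖f a‖ ≤ C) : ∫ a, ‖f a - ∫ b, f b ∂μ‖ ^ 2 ∂μ ≤ C ^ 2 := by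
  have hf_sq_le : ∀ a, ‖f a‖ ^ 2 ≤ C ^ 2 := fun a => pow_le_pow_left₀ (norm_nonneg _) (hC a) 2
  have hf2 : Integrable (fun a => ‖f a‖ ^ 2) μ :=
    .of_bound (hf.norm.pow 2).aestronglyMeasurable (C ^ 2) (ae_of_all _ fun a => by
      simpa using hf_sq_le a)
  have hmoment : ∫ a, ‖f a‖ ^ 2 ∂μ ≤ C ^ 2 := by
    simpa using integral_mono hf2 (integrable_const (C ^ 2)) hf_sq_le
  rw [integral_norm_sub_integral_sq (.of_bound hf.aestronglyMeasurable C (ae_of_all _ hC)) hf2]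
  nlinarith [sq_nonneg ‖∫ a, f a ∂μ‖]

end Moments

section Orthogonal

variable {α : Type*} [MeasurableSpace α] {μ : Measure α}
  {H : Type*} [NormedAddCommGroup H] [InnerProductSpace ℝ H]

lemma integral_norm_sum_sq_of_orthogonal {ι : Type*} (s : Finset ι) {Y : ι → α → H}
    (hint : ∀ i j, Integrable (fun a => ⟪Y i a, Y j a⟫) μ)
    (horth : ∀ i j, i ≠ j → ∫ a, ⟪Y i a, Y j a⟫ ∂μ = 0) :
    ∫ a, ‖∑ i ∈ s, Y i a‖ ^ 2 ∂μ = ∑ i ∈ s, ∫ a, ‖Y i a‖ ^ 2 ∂μ := by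
  have hexpand : ∀ a, ‖∑ i ∈ s, Y i a‖ ^ 2 = ∑ i ∈ s, ∑ j ∈ s, ⟪Y i a, Y j a⟫ := fun a => by
    rw [← real_inner_self_eq_norm_sq, sum_inner]
    simp_rw [inner_sum]
  simp_rw [hexpand]
  rw [integral_finsetSum _ fun i _ => integrable_finsetSum _ fun j _ => hint i j]
  refine Finset.sum_congr rfl fun i hi => ?_
  rw [integral_finsetSum _ fun j _ => hint i j,
    Finset.sum_eq_single_of_mem i hi fun j _ hji => horth i j (Ne.symm hji)]
  simp_rw [real_inner_self_eq_norm_sq]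

end Orthogonal

section EmpiricalMean

variable {Ω X : Type*} [MeasurableSpace Ω] [MeasurableSpace X]
  {μ : Measure Ω} [IsProbabilityMeasure μ] {P : Measure X} [IsProbabilityMeasure P]
  {C : ℝ} {n : ℕ} {Xs : Fin n → Ω → X}

lemma norm_integral_le_of_forall_norm_le {E : Type*} [NormedAddCommGroup E] [NormedSpace ℝ E]
    {f : X → E} (hC : ∀ x, ‖f x‖ ≤ C) : ‖∫ x, f x ∂P‖ ≤ C := by
  simpa using norm_integral_le_of_norm_le_const (μ := P) (ae_of_all _ hC)

lemma integrable_norm_empiricalMean_sub {E : Type*} [NormedAddCommGroup E] [NormedSpace ℝ E]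
    {f : X → E} (hf : StronglyMeasurable f) (hC : ∀ x, ‖f x‖ ≤ C)
    (hmeas : ∀ i, Measurable (Xs i)) :
    Integrable (fun ω => ‖(n : ℝ)⁻¹ • ∑ i, f (Xs i ω) - ∫ x, f x ∂P‖) μ := by
  have hC₀ : 0 ≤ C := (norm_nonneg _).trans (hC (nonempty_of_isProbabilityMeasure P).some)
  have hmeas_dev : StronglyMeasurable fun ω => ‖(n : ℝ)⁻¹ • ∑ i, f (Xs i ω) - ∫ x, f x ∂P‖ :=
    ((Finset.stronglyMeasurable_fun_sum _ fun i _ => hf.comp_measurable (hmeas i)).const_smul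
      _ |>.sub stronglyMeasurable_const).norm
  refine .of_bound hmeas_dev.aestronglyMeasurable (C + C) (ae_of_all _ fun ω => ?_)
  rw [Real.norm_of_nonneg (norm_nonneg _)]
  exact (norm_sub_le _ _).trans <|
    add_le_add (norm_inv_smul_sum_le hC₀ fun i => hC _) (norm_integral_le_of_forall_norm_le hC)

variable {H : Type*} [NormedAddCommGroup H] [InnerProductSpace ℝ H] [CompleteSpace H]
  {f : X → H}

lemma integral_norm_sum_sub_integral_sq_le (hf : StronglyMeasurable f) (hC : ∀ x, ‖f x‖ ≤ C)
    (hmeas : ∀ i, Measurable (Xs i)) (hlaw : ∀ i, μ.map (Xs i) = P)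
    (hindep : Pairwise fun i j => IndepFun (Xs i) (Xs j) μ) :
    ∫ ω, ‖∑ i, (f (Xs i ω) - ∫ x, f x ∂P)‖ ^ 2 ∂μ ≤ n * C ^ 2 := by
  set g : X → H := fun x => f x - ∫ x, f x ∂P
  have hg_meas : StronglyMeasurable g := hf.sub stronglyMeasurable_const
  have hf_int : Integrable f P := .of_bound hf.aestronglyMeasurable C (ae_of_all _ hC)
  have hg_int : ∀ i, Integrable g (μ.map (Xs i)) := fun i =>
    hlaw i ▸ hf_int.sub (integrable_const _)
  have hg_bdd : ∀ x, ‖g x‖ ≤ C + C := fun x =>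
    (norm_sub_le _ _).trans (add_le_add (hC x) (norm_integral_le_of_forall_norm_le hC))
  have hgX_mean : ∀ i, ∫ ω, g (Xs i ω) ∂μ = 0 := fun i => by
    rw [← integral_map (hmeas i).aemeasurable (hg_int i).aestronglyMeasurable, hlaw i,
      integral_sub hf_int (integrable_const _), integral_const, probReal_univ, one_smul, sub_self]
  have hgX_meas : ∀ i, StronglyMeasurable fun ω => g (Xs i ω) := fun i =>
    hg_meas.comp_measurable (hmeas i)
  have hinner_int : ∀ i j, Integrable (fun ω => ⟪g (Xs i ω), g (Xs j ω)⟫) μ := fun i j =>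
    .of_bound (continuous_inner.comp_stronglyMeasurable
        ((hgX_meas i).prodMk (hgX_meas j))).aestronglyMeasurable
      ((C + C) * (C + C)) (ae_of_all _ fun ω => (norm_inner_le_norm _ _).trans <|
        mul_le_mul (hg_bdd _) (hg_bdd _) (norm_nonneg _) ((norm_nonneg _).trans (hg_bdd (Xs i ω))))
  have horth : ∀ i j, i ≠ j → ∫ ω, ⟪g (Xs i ω), g (Xs j ω)⟫ ∂μ = 0 := fun i j hij =>
    calc ∫ ω, ⟪g (Xs i ω), g (Xs j ω)⟫ ∂μ = ⟪∫ ω, g (Xs i ω) ∂μ, ∫ ω, g (Xs j ω) ∂μ⟫ :=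
          (hindep hij).integral_bilin_comp_comp (hmeas i).aemeasurable (hmeas j).aemeasurable
            (hg_int i) (hg_int j) (innerSL ℝ)
      _ = 0 := by rw [hgX_mean, inner_zero_left]
  have hvar : ∀ i, ∫ ω, ‖g (Xs i ω)‖ ^ 2 ∂μ ≤ C ^ 2 := fun i => by
    rw [← integral_map (f := fun x => ‖g x‖ ^ 2) (hmeas i).aemeasurable
      (hg_meas.norm.pow 2).aestronglyMeasurable, hlaw i]
    exact integral_norm_sub_integral_sq_le hf hC
  rw [integral_norm_sum_sq_of_orthogonal _ hinner_int horth]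
  simpa using Finset.sum_le_sum fun i (_ : i ∈ Finset.univ) => hvar i

lemma integral_norm_empiricalMean_sub_le (hf : StronglyMeasurable f) (hC : ∀ x, ‖f x‖ ≤ C)
    (hn : 0 < n) (hmeas : ∀ i, Measurable (Xs i)) (hlaw : ∀ i, μ.map (Xs i) = P)
    (hindep : Pairwise fun i j => IndepFun (Xs i) (Xs j) μ) :
    ∫ ω, ‖(n : ℝ)⁻¹ • ∑ i, f (Xs i ω) - ∫ x, f x ∂P‖ ∂μ ≤ C / √n := by
  set m := ∫ x, f x ∂P
  have hC₀ : 0 ≤ C := (norm_nonneg _).trans (hC (nonempty_of_isProbabilityMeasure P).some)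
  have hL2 : MemLp (fun ω => ‖∑ i, (f (Xs i ω) - m)‖) 2 μ :=
    .of_bound (Finset.stronglyMeasurable_fun_sum _ fun i _ =>
        (hf.comp_measurable (hmeas i)).sub stronglyMeasurable_const).norm.aestronglyMeasurable
      (n * (C + C)) (ae_of_all _ fun ω => by
        simpa [m, mul_add] using (norm_sum_le Finset.univ _).trans (Finset.sum_le_sum fun i _ =>
          (norm_sub_le _ _).trans (add_le_add (hC (Xs i ω)) (norm_integral_le_of_forall_norm_le (P := P) hC))))
  have hsum : ∫ ω, ‖∑ i, (f (Xs i ω) - m)‖ ∂μ ≤ √n * C :=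
    calc ∫ ω, ‖∑ i, (f (Xs i ω) - m)‖ ∂μ ≤ √(∫ ω, ‖∑ i, (f (Xs i ω) - m)‖ ^ 2 ∂μ) :=
          integral_le_sqrt_integral_sq hL2
      _ ≤ √(n * C ^ 2) :=
          Real.sqrt_le_sqrt (integral_norm_sum_sub_integral_sq_le hf hC hmeas hlaw hindep)
      _ = √n * C := by rw [Real.sqrt_mul (Nat.cast_nonneg n), Real.sqrt_sq hC₀]
  calc ∫ ω, ‖(n : ℝ)⁻¹ • ∑ i, f (Xs i ω) - m‖ ∂μ
      = (n : ℝ)⁻¹ * ∫ ω, ‖∑ i, (f (Xs i ω) - m)‖ ∂μ := by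
        simp_rw [inv_smul_sum_sub hn.ne', norm_smul, integral_const_mul]
        simp
    _ ≤ (n : ℝ)⁻¹ * (√n * C) := by gcongr
    _ = C / √n := by
        have hsqrt : √(n : ℝ) ≠ 0 := by positivity
        field_simp
        rw [Real.sq_sqrt (Nat.cast_nonneg n)]

end EmpiricalMean

theorem mmd_minimizer_expected_risk_general {Ω : Type*} [MeasurableSpace Ω]
    {X : Type*} [MeasurableSpace X] {H : Type*}
    [NormedAddCommGroup H] [InnerProductSpace ℝ H] [CompleteSpace H]
    {Θ : Type*} [Nonempty Θ]
    (μ : Measure Ω) [IsProbabilityMeasure μ]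
    (φ : X → H) (hφ : MeasureTheory.StronglyMeasurable φ) (hbdd : ∀ x, ‖φ x‖ ≤ 1)
    (n : ℕ) (hn : 0 < n) (Xs : Fin n → Ω → X)
    (P0 : Measure X) [IsProbabilityMeasure P0]
    (hmeas : ∀ i, Measurable (Xs i))
    (hlaw : ∀ i, Measure.map (Xs i) μ = P0)
    (hindep : ProbabilityTheory.iIndepFun
      Xs μ)
    (Pθ : Θ → Measure X) [∀ θ, IsProbabilityMeasure (Pθ θ)]
    (θhat : Ω → Θ)
    (hargmin : ∀ ω θ,
      ‖(∫ x, φ x ∂(Pθ (θhat ω))) - (n : ℝ)⁻¹ • ∑ i, φ (Xs i ω)‖ ≤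
        ‖(∫ x, φ x ∂(Pθ θ)) - (n : ℝ)⁻¹ • ∑ i, φ (Xs i ω)‖) :
    ∫ ω, ‖(∫ x, φ x ∂(Pθ (θhat ω))) - ∫ x, φ x ∂P0‖ ∂μ ≤
      (⨅ θ, ‖(∫ x, φ x ∂(Pθ θ)) - ∫ x, φ x ∂P0‖) + 2 / Real.sqrt n := by
  set m₀ := ∫ x, φ x ∂P0
  set dev := fun ω => ‖(n : ℝ)⁻¹ • ∑ i, φ (Xs i ω) - m₀‖
  have hdev_int : Integrable dev μ := integrable_norm_empiricalMean_sub hφ hbdd hmeas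
  have hdev : ∫ ω, dev ω ∂μ ≤ 1 / √n :=
    integral_norm_empiricalMean_sub_le hφ hbdd hn hmeas hlaw fun i j hij => hindep.indepFun hij
  have hrisk : ∀ θ, ∫ ω, ‖(∫ x, φ x ∂(Pθ (θhat ω))) - m₀‖ ∂μ
      ≤ ‖(∫ x, φ x ∂(Pθ θ)) - m₀‖ + 2 * ∫ ω, dev ω ∂μ := fun θ =>
    calc ∫ ω, ‖(∫ x, φ x ∂(Pθ (θhat ω))) - m₀‖ ∂μ
        ≤ ∫ ω, (‖(∫ x, φ x ∂(Pθ θ)) - m₀‖ + 2 * dev ω) ∂μ :=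
          integral_mono_of_nonneg (ae_of_all _ fun _ => norm_nonneg _)
            ((integrable_const _).add (hdev_int.const_mul 2))
            (ae_of_all _ fun ω => norm_sub_le_add_two_mul_of_norm_sub_le (hargmin ω θ))
      _ = ‖(∫ x, φ x ∂(Pθ θ)) - m₀‖ + 2 * ∫ ω, dev ω ∂μ := by
          rw [integral_add (integrable_const _) (hdev_int.const_mul 2), integral_const,
            integral_const_mul, probReal_univ, one_smul]
  calc ∫ ω, ‖(∫ x, φ x ∂(Pθ (θhat ω))) - m₀‖ ∂μ
      ≤ (⨅ θ, ‖(∫ x, φ x ∂(Pθ θ)) - m₀‖) + 2 * ∫ ω, dev ω ∂μ :=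
        sub_le_iff_le_add.1 <| le_ciInf fun θ => sub_le_iff_le_add.2 (hrisk θ)
    _ ≤ (⨅ θ, ‖(∫ x, φ x ∂(Pθ θ)) - m₀‖) + 2 / √n := by
        rw [div_eq_mul_one_div 2]
        gcongr

theorem mmd_minimizer_expected_risk {Ω : Type*} [MeasurableSpace Ω]
    {X : Type*} [MeasurableSpace X] {H : Type*}
    [NormedAddCommGroup H] [InnerProductSpace ℝ H] [CompleteSpace H]
    {Θ : Type*} [Nonempty Θ]
    (μ : Measure Ω) [IsProbabilityMeasure μ]
    (φ : X → H) (hφ : MeasureTheory.StronglyMeasurable φ) (hbdd : ∀ x, ‖φ x‖ ≤ 1)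
    (n : ℕ) (hn : 0 < n) (Xs : Fin n → Ω → X)
    (P0 : Measure X) [IsProbabilityMeasure P0]
    (hmeas : ∀ i, Measurable (Xs i))
    (hlaw : ∀ i, Measure.map (Xs i) μ = P0)
    (hindep : ProbabilityTheory.iIndepFun
      Xs μ)
    (Pθ : Θ → Measure X) [∀ θ, IsProbabilityMeasure (Pθ θ)]
    (θhat : Ω → Θ)
    (hargmin : ∀ ω θ,
      ‖(∫ x, φ x ∂(Pθ (θhat ω))) - (n : ℝ)⁻¹ • ∑ i, φ (Xs i ω)‖ ≤
        ‖(∫ x, φ x ∂(Pθ θ)) - (n : ℝ)⁻¹ • ∑ i, φ (Xs i ω)‖)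
    (hmeas' : AEStronglyMeasurable
      (fun ω => ‖(∫ x, φ x ∂(Pθ (θhat ω))) - ∫ x, φ x ∂P0‖) μ) :
    ∫ ω, ‖(∫ x, φ x ∂(Pθ (θhat ω))) - ∫ x, φ x ∂P0‖ ∂μ ≤
      (⨅ θ, ‖(∫ x, φ x ∂(Pθ θ)) - ∫ x, φ x ∂P0‖) + 2 / Real.sqrt n :=
  mmd_minimizer_expected_risk_general μ φ hφ hbdd n hn Xs P0 hmeas hlaw hindep Pθ θhat hargmin
end

section
/- Huber-type robustness of MMD minimizers: if the data-generating distribution is the contamination P⁰ = (1−α) P_{θ*} + α Q for some θ* ∈ Θ, contamination rate α ∈ [0,1], and arbitrary Q, and the kernel is bounded by 1, then inf_{θ∈Θ} D(P_θ, P⁰) ≤ D(P_{θ*}, P⁰) ≤ 2α. Consequently any exact MMD minimizer θ̂ over the empirical measure of an i.i.d. sample of size n from P⁰ satisfies E[D(P_{θ̂}, P_{θ*})] ≤ 4α + 2/√n. -/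
/-!
The contamination moves the mean embedding of `P_{θ*}` only along `μ(Q) - μ(P_{θ*})`:
`μ(P⁰) - μ(P_{θ*}) = α (μ(Q) - μ(P_{θ*}))`, a vector of norm at most `2α`, which is the bias term.
For the minimizer, comparing with `θ*` and using the triangle inequality twice gives
`‖μ(P_θ̂) - μ(P_{θ*})‖ ≤ 2‖μ̂ₙ - μ(P⁰)‖ + 2‖μ(P_{θ*}) - μ(P⁰)‖`, where `μ̂ₙ` is the empirical mean
embedding. Independence makes the cross terms of `‖μ̂ₙ - μ(P⁰)‖²` vanish, so its expectation is
the variance of `φ` divided by `n`, at most `1/n`; Jensen turns this into `E‖μ̂ₙ - μ(P⁰)‖ ≤ 1/√n`.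
-/

open MeasureTheory ProbabilityTheory
open scoped RealInnerProductSpace

section Contamination

variable {X E : Type*} [MeasurableSpace X] [NormedAddCommGroup E] [NormedSpace ℝ E]

noncomputable def huberContamination (α : ℝ) (P Q : Measure X) : Measure X :=
  ENNReal.ofReal (1 - α) • P + ENNReal.ofReal α • Q

variable {α : ℝ} {P Q : Measure X}

lemma isProbabilityMeasure_huberContamination [IsProbabilityMeasure P] [IsProbabilityMeasure Q]
    (hα : α ∈ Set.Icc (0 : ℝ) 1) : IsProbabilityMeasure (huberContamination α P Q) := by
  constructor
  simp only [huberContamination, Measure.add_apply, Measure.smul_apply, smul_eq_mul,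
    measure_univ, mul_one]
  rw [← ENNReal.ofReal_add (by linarith [hα.2]) hα.1]
  simp

lemma integral_huberContamination {f : X → E} (hP : Integrable f P) (hQ : Integrable f Q)
    (hα : α ∈ Set.Icc (0 : ℝ) 1) :
    ∫ x, f x ∂(huberContamination α P Q) = (1 - α) • ∫ x, f x ∂P + α • ∫ x, f x ∂Q := by
  rw [huberContamination, integral_add_measure (hP.smul_measure ENNReal.ofReal_ne_top)
      (hQ.smul_measure ENNReal.ofReal_ne_top), integral_smul_measure, integral_smul_measure,
    ENNReal.toReal_ofReal (by linarith [hα.2]), ENNReal.toReal_ofReal hα.1]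

lemma norm_integral_sub_integral_huberContamination_le [IsProbabilityMeasure P]
    [IsProbabilityMeasure Q] {f : X → E} {C : ℝ} (hf : StronglyMeasurable f)
    (hbdd : ∀ x, ‖f x‖ ≤ C) (hα : α ∈ Set.Icc (0 : ℝ) 1) :
    ‖∫ x, f x ∂P - ∫ x, f x ∂(huberContamination α P Q)‖ ≤ 2 * C * α := by
  have hint (ν : Measure X) [IsProbabilityMeasure ν] : Integrable f ν :=
    .of_bound hf.aestronglyMeasurable C (ae_of_all _ hbdd)
  have hnorm (ν : Measure X) [IsProbabilityMeasure ν] : ‖∫ x, f x ∂ν‖ ≤ C := by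
    simpa using norm_integral_le_of_norm_le_const (μ := ν) (ae_of_all _ hbdd)
  have hdiff : ∫ x, f x ∂P - ∫ x, f x ∂(huberContamination α P Q)
      = α • (∫ x, f x ∂P - ∫ x, f x ∂Q) := by
    rw [integral_huberContamination (hint P) (hint Q) hα]
    module
  calc ‖∫ x, f x ∂P - ∫ x, f x ∂(huberContamination α P Q)‖
      = α * ‖∫ x, f x ∂P - ∫ x, f x ∂Q‖ := by
        rw [hdiff, norm_smul, Real.norm_of_nonneg hα.1]
    _ ≤ α * (C + C) := by
        gcongr
        · exact hα.1
        · exact (norm_sub_le _ _).trans (add_le_add (hnorm P) (hnorm Q))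
    _ = 2 * C * α := by ring

end Contamination

lemma norm_sub_le_of_norm_sub_le_norm_sub {E : Type*} [SeminormedAddCommGroup E] {a b s m : E}
    (h : ‖a - s‖ ≤ ‖b - s‖) : ‖a - b‖ ≤ 2 * ‖s - m‖ + 2 * ‖b - m‖ := by
  have hab := norm_sub_le_norm_sub_add_norm_sub a s b
  have hbs := norm_sub_le_norm_sub_add_norm_sub b m s
  rw [norm_sub_rev s b] at hab
  rw [norm_sub_rev m s] at hbs
  linarith

lemma integral_norm_sub_le_of_forall_norm_sub_le {Ω E : Type*} [MeasurableSpace Ω] {μ : Measure Ω}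
    [IsProbabilityMeasure μ] [NormedAddCommGroup E] {a S : Ω → E} {b m : E}
    (hmin : ∀ ω, ‖a ω - S ω‖ ≤ ‖b - S ω‖) (hS : Integrable (fun ω => ‖S ω - m‖) μ) :
    ∫ ω, ‖a ω - b‖ ∂μ ≤ 2 * ∫ ω, ‖S ω - m‖ ∂μ + 2 * ‖b - m‖ :=
  calc ∫ ω, ‖a ω - b‖ ∂μ ≤ ∫ ω, (2 * ‖S ω - m‖ + 2 * ‖b - m‖) ∂μ :=
        integral_mono_of_nonneg (ae_of_all _ fun _ => norm_nonneg _)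
          ((hS.const_mul 2).add (integrable_const _))
          (ae_of_all _ fun ω => norm_sub_le_of_norm_sub_le_norm_sub (hmin ω))
    _ = 2 * ∫ ω, ‖S ω - m‖ ∂μ + 2 * ‖b - m‖ := by
        rw [integral_add (hS.const_mul 2) (integrable_const _), integral_const_mul,
          integral_const, probReal_univ, one_smul]

lemma sq_integral_le_integral_sq {Ω : Type*} [MeasurableSpace Ω] {μ : Measure Ω}
    [IsProbabilityMeasure μ] {h : Ω → ℝ} (hh : MemLp h 2 μ) :
    (∫ ω, h ω ∂μ) ^ 2 ≤ ∫ ω, h ω ^ 2 ∂μ := by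
  have := variance_nonneg h μ
  rw [variance_eq_sub hh] at this
  simpa using this

lemma memLp_const_smul_sum_comp {Ω X ι E : Type*} [MeasurableSpace Ω] [MeasurableSpace X]
    [Fintype ι] [NormedAddCommGroup E] [NormedSpace ℝ E] {μ : Measure Ω} {Xs : ι → Ω → X}
    {P : Measure X} {f : X → E} {p : ENNReal} (c : ℝ)
    (hmeas : ∀ i, AEMeasurable (Xs i) μ) (hlaw : ∀ i, μ.map (Xs i) = P) (hf : MemLp f p P) :
    MemLp (fun ω => c • ∑ i, f (Xs i ω)) p μ := by
  have hfX (i : ι) : MemLp (fun ω => f (Xs i ω)) p μ := by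
    have hf_law : MemLp f p (μ.map (Xs i)) := by rw [hlaw i]; exact hf
    exact hf_law.comp_of_map (hmeas i)
  exact (memLp_finsetSum Finset.univ fun i _ => hfX i).const_smul c

section Hilbert

variable {Ω H : Type*} [MeasurableSpace Ω] {μ : Measure Ω}
  [NormedAddCommGroup H] [InnerProductSpace ℝ H]

lemma MeasureTheory.MemLp.integrable_inner {f g : Ω → H} (hf : MemLp f 2 μ) (hg : MemLp g 2 μ) :
    Integrable (fun ω => ⟪f ω, g ω⟫) μ :=
  (hf.norm.integrable_mul hg.norm).mono' (hf.1.inner (𝕜 := ℝ) hg.1)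
    (ae_of_all _ fun ω => by simpa using norm_inner_le_norm (𝕜 := ℝ) (f ω) (g ω))

variable [CompleteSpace H]

lemma integral_norm_sub_integral_sq_s8 [IsProbabilityMeasure μ] {f : Ω → H} (hf : MemLp f 2 μ) :
    ∫ ω, ‖f ω - ∫ ω', f ω' ∂μ‖ ^ 2 ∂μ = ∫ ω, ‖f ω‖ ^ 2 ∂μ - ‖∫ ω, f ω ∂μ‖ ^ 2 := by
  set m := ∫ ω, f ω ∂μ
  have hint : Integrable f μ := hf.integrable one_le_two
  have hsq : Integrable (fun ω => ‖f ω‖ ^ 2) μ := (memLp_two_iff_integrable_sq_norm hf.1).1 hf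
  have hlin : Integrable (fun ω => 2 * ⟪m, f ω⟫) μ := (hint.const_inner m).const_mul 2
  have hexpand (ω : Ω) : ‖f ω - m‖ ^ 2 = ‖f ω‖ ^ 2 - 2 * ⟪m, f ω⟫ + ‖m‖ ^ 2 := by
    rw [norm_sub_sq_real, real_inner_comm]
  simp_rw [hexpand]
  rw [integral_add (f := fun ω => ‖f ω‖ ^ 2 - 2 * ⟪m, f ω⟫) (hsq.sub hlin) (integrable_const _),
    integral_sub hsq hlin, integral_const_mul, integral_inner hint, real_inner_self_eq_norm_sq,
    integral_const]
  simp only [probReal_univ, one_smul]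
  ring

lemma integral_norm_sub_integral_sq_le_of_norm_le [IsProbabilityMeasure μ] {f : Ω → H} {C : ℝ}
    (hf : AEStronglyMeasurable f μ) (hbdd : ∀ ω, ‖f ω‖ ≤ C) :
    ∫ ω, ‖f ω - ∫ ω', f ω' ∂μ‖ ^ 2 ∂μ ≤ C ^ 2 := by
  rw [integral_norm_sub_integral_sq_s8 (.of_bound hf C (ae_of_all _ hbdd))]
  have hsq : ∫ ω, ‖f ω‖ ^ 2 ∂μ ≤ ∫ _ω, C ^ 2 ∂μ :=
    integral_mono_of_nonneg (ae_of_all _ fun ω => by positivity) (integrable_const _)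
      (ae_of_all _ fun ω => pow_le_pow_left₀ (norm_nonneg _) (hbdd ω) 2)
  simp only [integral_const, probReal_univ, one_smul] at hsq
  nlinarith [sq_nonneg ‖∫ ω, f ω ∂μ‖]

variable {X ι : Type*} [MeasurableSpace X] [Fintype ι] {Xs : ι → Ω → X}
  {P : Measure X} [IsProbabilityMeasure P] {f : X → H}

lemma integral_norm_sum_sub_integral_sq (hmeas : ∀ i, AEMeasurable (Xs i) μ)
    (hlaw : ∀ i, μ.map (Xs i) = P) (hindep : iIndepFun Xs μ) (hf : MemLp f 2 P) :
    ∫ ω, ‖∑ i, (f (Xs i ω) - ∫ x, f x ∂P)‖ ^ 2 ∂μ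
      = Fintype.card ι * ∫ x, ‖f x - ∫ x', f x' ∂P‖ ^ 2 ∂P := by
  set m := ∫ x, f x ∂P
  set g : X → H := fun x => f x - m
  have hg : MemLp g 2 P := hf.sub (memLp_const m)
  have hg_law (i : ι) : MemLp g 2 (μ.map (Xs i)) := by rw [hlaw i]; exact hg
  have hg_int (i : ι) : Integrable g (μ.map (Xs i)) := by
    rw [hlaw i]; exact hg.integrable one_le_two
  have hZ (i : ι) : MemLp (fun ω => g (Xs i ω)) 2 μ := (hg_law i).comp_of_map (hmeas i)
  have hmean (i : ι) : ∫ ω, g (Xs i ω) ∂μ = 0 := by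
    rw [← integral_map (hmeas i) (hg_law i).1, hlaw i, integral_sub (hf.integrable one_le_two)
      (integrable_const m), integral_const]
    simp [m]
  have hcross (i j : ι) (hij : i ≠ j) : ∫ ω, ⟪g (Xs i ω), g (Xs j ω)⟫ ∂μ = 0 := by
    refine ((hindep.indepFun hij).integral_bilin_comp_comp (hmeas i) (hmeas j)
      (hg_int i) (hg_int j) (innerSL ℝ)).trans ?_
    simp [hmean i]
  have hdiag (i : ι) : ∫ ω, ⟪g (Xs i ω), g (Xs i ω)⟫ ∂μ = ∫ x, ‖g x‖ ^ 2 ∂P := by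
    simp_rw [real_inner_self_eq_norm_sq]
    have := (hg_law i).1
    rw [← hlaw i, integral_map (hmeas i) (by fun_prop)]
  have hexpand (ω : Ω) : ‖∑ i, g (Xs i ω)‖ ^ 2 = ∑ i, ∑ j, ⟪g (Xs i ω), g (Xs j ω)⟫ := by
    simp_rw [← real_inner_self_eq_norm_sq, sum_inner, inner_sum]
  have hint (i j : ι) : Integrable (fun ω => ⟪g (Xs i ω), g (Xs j ω)⟫) μ :=
    (hZ i).integrable_inner (hZ j)
  calc ∫ ω, ‖∑ i, g (Xs i ω)‖ ^ 2 ∂μ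
      = ∑ i, ∑ j, ∫ ω, ⟪g (Xs i ω), g (Xs j ω)⟫ ∂μ := by
        simp_rw [hexpand]
        rw [integral_finsetSum _ fun i _ => integrable_finsetSum _ fun j _ => hint i j]
        exact Finset.sum_congr rfl fun i _ => integral_finsetSum _ fun j _ => hint i j
    _ = ∑ i : ι, ∫ x, ‖g x‖ ^ 2 ∂P := by
        refine Finset.sum_congr rfl fun i _ => ?_
        rw [Finset.sum_eq_single_of_mem i (Finset.mem_univ i)
          fun j _ hji => hcross i j (Ne.symm hji), hdiag i]
    _ = _ := by simp [g]

lemma integral_norm_empiricalMean_sub_integral_le [IsProbabilityMeasure μ] {n : ℕ} (hn : 0 < n)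
    {Xs : Fin n → Ω → X} (hmeas : ∀ i, AEMeasurable (Xs i) μ) (hlaw : ∀ i, μ.map (Xs i) = P)
    (hindep : iIndepFun Xs μ) (hf : MemLp f 2 P) :
    ∫ ω, ‖(n : ℝ)⁻¹ • ∑ i, f (Xs i ω) - ∫ x, f x ∂P‖ ∂μ
      ≤ √((∫ x, ‖f x - ∫ x', f x' ∂P‖ ^ 2 ∂P) / n) := by
  set m := ∫ x, f x ∂P with hm
  have hn' : (n : ℝ) ≠ 0 := by positivity
  have hcenter (ω : Ω) :
      (n : ℝ)⁻¹ • ∑ i, f (Xs i ω) - m = (n : ℝ)⁻¹ • ∑ i, (f (Xs i ω) - m) := by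
    rw [Finset.sum_sub_distrib, smul_sub, Finset.sum_const, Finset.card_univ, Fintype.card_fin,
      ← Nat.cast_smul_eq_nsmul ℝ, smul_smul, inv_mul_cancel₀ hn', one_smul]
  have hmemLp : MemLp (fun ω => ‖(n : ℝ)⁻¹ • ∑ i, f (Xs i ω) - m‖) 2 μ :=
    ((memLp_const_smul_sum_comp _ hmeas hlaw hf).sub (memLp_const m)).norm
  refine Real.le_sqrt_of_sq_le ((sq_integral_le_integral_sq hmemLp).trans_eq ?_)
  simp_rw [hcenter, norm_smul, mul_pow, Real.norm_of_nonneg (inv_nonneg.2 (Nat.cast_nonneg n))]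
  rw [integral_const_mul, integral_norm_sum_sub_integral_sq hmeas hlaw hindep hf,
    Fintype.card_fin, ← hm]
  field_simp

end Hilbert

theorem mmd_huber_robustness_general {Ω : Type*} [MeasurableSpace Ω]
    {X : Type*} [MeasurableSpace X] {H : Type*}
    [NormedAddCommGroup H] [InnerProductSpace ℝ H] [CompleteSpace H]
    {Θ : Type*}
    (μ : Measure Ω) [IsProbabilityMeasure μ]
    (φ : X → H) (hφ : MeasureTheory.StronglyMeasurable φ) (hbdd : ∀ x, ‖φ x‖ ≤ 1)
    (Pθ : Θ → Measure X) [∀ θ, IsProbabilityMeasure (Pθ θ)]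
    (θstar : Θ) (Q : Measure X) [IsProbabilityMeasure Q]
    (α : ℝ) (hα : α ∈ Set.Icc (0 : ℝ) 1)
    (P0 : Measure X)
    (hP0 : P0 = ENNReal.ofReal (1 - α) • Pθ θstar + ENNReal.ofReal α • Q)
    (n : ℕ) (hn : 0 < n) (Xs : Fin n → Ω → X)
    (hmeas : ∀ i, Measurable (Xs i))
    (hlaw : ∀ i, Measure.map (Xs i) μ = P0)
    (hindep : ProbabilityTheory.iIndepFun
      (m := fun _ : Fin n => (inferInstance : MeasurableSpace X)) Xs μ)
    (θhat : Ω → Θ)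
    (hargmin : ∀ ω θ,
      ‖(∫ x, φ x ∂(Pθ (θhat ω))) - (n : ℝ)⁻¹ • ∑ i, φ (Xs i ω)‖ ≤
        ‖(∫ x, φ x ∂(Pθ θ)) - (n : ℝ)⁻¹ • ∑ i, φ (Xs i ω)‖) :
    (⨅ θ, ‖(∫ x, φ x ∂(Pθ θ)) - ∫ x, φ x ∂P0‖) ≤
        ‖(∫ x, φ x ∂(Pθ θstar)) - ∫ x, φ x ∂P0‖ ∧
    ‖(∫ x, φ x ∂(Pθ θstar)) - ∫ x, φ x ∂P0‖ ≤ 2 * α ∧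
    ∫ ω, ‖(∫ x, φ x ∂(Pθ (θhat ω))) - ∫ x, φ x ∂(Pθ θstar)‖ ∂μ ≤
      4 * α + 2 / Real.sqrt n := by
  replace hP0 : P0 = huberContamination α (Pθ θstar) Q := hP0
  have : IsProbabilityMeasure P0 := hP0 ▸ isProbabilityMeasure_huberContamination hα
  have hbias : ‖(∫ x, φ x ∂(Pθ θstar)) - ∫ x, φ x ∂P0‖ ≤ 2 * α := by
    simpa [hP0] using norm_integral_sub_integral_huberContamination_le (Q := Q) hφ hbdd hα
  refine ⟨ciInf_le ⟨0, by rintro _ ⟨θ, rfl⟩; positivity⟩ θstar, hbias, ?_⟩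
  set m := ∫ x, φ x ∂P0
  have hφ2 : MemLp φ 2 P0 := .of_bound hφ.aestronglyMeasurable 1 (ae_of_all _ hbdd)
  have hvar : ∫ x, ‖φ x - m‖ ^ 2 ∂P0 ≤ 1 := by
    simpa using integral_norm_sub_integral_sq_le_of_norm_le hφ.aestronglyMeasurable hbdd
  have hXs (i : Fin n) : AEMeasurable (Xs i) μ := (hmeas i).aemeasurable
  have hconc : ∫ ω, ‖(n : ℝ)⁻¹ • ∑ i, φ (Xs i ω) - m‖ ∂μ ≤ (√n)⁻¹ :=
    calc _ ≤ √((∫ x, ‖φ x - m‖ ^ 2 ∂P0) / n) :=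
          integral_norm_empiricalMean_sub_integral_le hn hXs hlaw hindep hφ2
      _ ≤ √(1 / n) := by gcongr
      _ = (√n)⁻¹ := by simp
  have hS : Integrable (fun ω => ‖(n : ℝ)⁻¹ • ∑ i, φ (Xs i ω) - m‖) μ :=
    ((memLp_const_smul_sum_comp _ hXs hlaw hφ2).sub (memLp_const m)).norm.integrable one_le_two
  calc _ ≤ 2 * ∫ ω, ‖(n : ℝ)⁻¹ • ∑ i, φ (Xs i ω) - m‖ ∂μ + 2 * ‖(∫ x, φ x ∂(Pθ θstar)) - m‖ :=
        integral_norm_sub_le_of_forall_norm_sub_le (fun ω => hargmin ω θstar) hS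
    _ ≤ 4 * α + 2 / √n := by rw [div_eq_mul_inv]; linarith

theorem mmd_huber_robustness {Ω : Type*} [MeasurableSpace Ω]
    {X : Type*} [MeasurableSpace X] {H : Type*}
    [NormedAddCommGroup H] [InnerProductSpace ℝ H] [CompleteSpace H]
    {Θ : Type*} [Nonempty Θ]
    (μ : Measure Ω) [IsProbabilityMeasure μ]
    (φ : X → H) (hφ : MeasureTheory.StronglyMeasurable φ) (hbdd : ∀ x, ‖φ x‖ ≤ 1)
    (Pθ : Θ → Measure X) [∀ θ, IsProbabilityMeasure (Pθ θ)]
    (θstar : Θ) (Q : Measure X) [IsProbabilityMeasure Q]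
    (α : ℝ) (hα : α ∈ Set.Icc (0 : ℝ) 1)
    (P0 : Measure X)
    (hP0 : P0 = ENNReal.ofReal (1 - α) • Pθ θstar + ENNReal.ofReal α • Q)
    (n : ℕ) (hn : 0 < n) (Xs : Fin n → Ω → X)
    (hmeas : ∀ i, Measurable (Xs i))
    (hlaw : ∀ i, Measure.map (Xs i) μ = P0)
    (hindep : ProbabilityTheory.iIndepFun
      (m := fun _ : Fin n => (inferInstance : MeasurableSpace X)) Xs μ)
    (θhat : Ω → Θ)
    (hargmin : ∀ ω θ,
      ‖(∫ x, φ x ∂(Pθ (θhat ω))) - (n : ℝ)⁻¹ • ∑ i, φ (Xs i ω)‖ ≤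
        ‖(∫ x, φ x ∂(Pθ θ)) - (n : ℝ)⁻¹ • ∑ i, φ (Xs i ω)‖)
    (hmeas' : AEStronglyMeasurable
      (fun ω => ‖(∫ x, φ x ∂(Pθ (θhat ω))) - ∫ x, φ x ∂(Pθ θstar)‖) μ) :
    (⨅ θ, ‖(∫ x, φ x ∂(Pθ θ)) - ∫ x, φ x ∂P0‖) ≤
        ‖(∫ x, φ x ∂(Pθ θstar)) - ∫ x, φ x ∂P0‖ ∧
    ‖(∫ x, φ x ∂(Pθ θstar)) - ∫ x, φ x ∂P0‖ ≤ 2 * α ∧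
    ∫ ω, ‖(∫ x, φ x ∂(Pθ (θhat ω))) - ∫ x, φ x ∂(Pθ θstar)‖ ∂μ ≤
      4 * α + 2 / Real.sqrt n :=
  mmd_huber_robustness_general μ φ hφ hbdd Pθ θstar Q α hα P0 hP0 n hn Xs hmeas hlaw hindep θhat
    hargmin
end

section
/- Mixture decomposition of the regression MMD criterion: for data points (X₁,Y₁),…,(Xₙ,Yₙ) and a product kernel k((x,y),(x',y')) = 1_{x=x'} k_Y(y,y'), the global criterion D²((1/n)Σᵢ δ_{Xᵢ}⊗P_{β(Xᵢ,θ)}, (1/n)Σᵢ δ_{Xᵢ}⊗δ_{Yᵢ}) equals (1/n²) Σᵢ D_Y²(P_{β(Xᵢ,θ)}, δ_{Yᵢ}) when the Xᵢ are pairwise distinct, where D_Y is the MMD on Y for kernel k_Y; in particular minimizing the global criterion is then equivalent to minimizing (1/n)Σᵢ D_Y²(P_{β(Xᵢ,θ)}, δ_{Yᵢ}) up to the factor 1/n. -/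
/-!
Centre each term at its data point: `∫ Φ(Xᵢ, ·) dPᵢ - Φ(Xᵢ, Yᵢ) = ∫ (Φ(Xᵢ, y) - Φ(Xᵢ, Yᵢ)) dPᵢ(y)`,
and likewise on `Y`. Inner products of such embeddings are double integrals of inner products of
the integrands, and the product kernel makes these vanish for `i ≠ j` (distinct `Xᵢ`) and agree
with the `k_Y` ones for `i = j`. Pythagoras then turns the squared norm of the sum into the sum of
the squared `D_Y` distances, and the minimisers are unchanged by the positive factor `1 / n`.
-/

open MeasureTheory
open scoped RealInnerProductSpace

section MeanEmbedding

variable {α E : Type*} [MeasurableSpace α] [NormedAddCommGroup E] [InnerProductSpace ℝ E]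
  [CompleteSpace E]

theorem integral_sub_const_of_isProbabilityMeasure {μ : Measure α} [IsProbabilityMeasure μ]
    {f : α → E} (hf : Integrable f μ) (c : E) :
    ∫ y, (f y - c) ∂μ = ∫ y, f y ∂μ - c := by
  rw [integral_sub hf (integrable_const c), integral_const, probReal_univ, one_smul]

variable {F : Type*} [NormedAddCommGroup F] [InnerProductSpace ℝ F] [CompleteSpace F]

theorem inner_integral_integral {μ ν : Measure α} {f g : α → E} (hf : Integrable f μ)
    (hg : Integrable g ν) :
    ⟪∫ y, f y ∂μ, ∫ y', g y' ∂ν⟫ = ∫ y', ∫ y, ⟪f y, g y'⟫ ∂μ ∂ν := by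
  rw [← integral_inner hg]
  congr 1 with y'
  rw [real_inner_comm, ← integral_inner hf]
  simp_rw [real_inner_comm]

theorem inner_integral_integral_eq_mul_of_inner_eq_mul {μ ν : Measure α} {f g : α → E}
    {f' g' : α → F} (hf : Integrable f μ) (hg : Integrable g ν) (hf' : Integrable f' μ)
    (hg' : Integrable g' ν) {c : ℝ} (h : ∀ y y', ⟪f y, g y'⟫ = c * ⟪f' y, g' y'⟫) :
    ⟪∫ y, f y ∂μ, ∫ y', g y' ∂ν⟫ = c * ⟪∫ y, f' y ∂μ, ∫ y', g' y' ∂ν⟫ := by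
  simp_rw [inner_integral_integral hf hg, inner_integral_integral hf' hg', h,
    integral_const_mul]

end MeanEmbedding

theorem norm_sum_sq_eq_sum_norm_sq_of_pairwise_inner_eq_zero {ι E : Type*} [Fintype ι]
    [NormedAddCommGroup E] [InnerProductSpace ℝ E] {v : ι → E}
    (hv : Pairwise fun i j => ⟪v i, v j⟫ = 0) :
    ‖∑ i, v i‖ ^ 2 = ∑ i, ‖v i‖ ^ 2 := by
  classical
  rw [← real_inner_self_eq_norm_sq, sum_inner]
  refine Finset.sum_congr rfl fun i _ => ?_
  rw [inner_sum, Finset.sum_eq_single i (fun j _ hji => hv hji.symm) (by simp),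
    real_inner_self_eq_norm_sq]

theorem inner_sub_sub_of_inner_eq_indicator_mul {X Y H HY : Type*} [DecidableEq X]
    [NormedAddCommGroup H] [InnerProductSpace ℝ H] [NormedAddCommGroup HY]
    [InnerProductSpace ℝ HY] {Φ : X × Y → H} {φY : Y → HY}
    (hker : ∀ x x' y y',
      ⟪Φ (x, y), Φ (x', y')⟫ = (if x = x' then (1 : ℝ) else 0) * ⟪φY y, φY y'⟫)
    (x x' : X) (y a y' b : Y) :
    ⟪Φ (x, y) - Φ (x, a), Φ (x', y') - Φ (x', b)⟫ =
      (if x = x' then (1 : ℝ) else 0) * ⟪φY y - φY a, φY y' - φY b⟫ := by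
  simp only [inner_sub_left, inner_sub_right, hker]
  ring

theorem norm_sum_integral_sub_sq_of_inner_eq_indicator_mul {ι X Y H HY : Type*} [Fintype ι]
    [DecidableEq X] [MeasurableSpace Y]
    [NormedAddCommGroup H] [InnerProductSpace ℝ H] [CompleteSpace H]
    [NormedAddCommGroup HY] [InnerProductSpace ℝ HY] [CompleteSpace HY]
    {Φ : X × Y → H} {φY : Y → HY}
    (hker : ∀ x x' y y',
      ⟪Φ (x, y), Φ (x', y')⟫ = (if x = x' then (1 : ℝ) else 0) * ⟪φY y, φY y'⟫)
    {xs : ι → X} (hxs : Function.Injective xs) (ys : ι → Y)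
    (μ : ι → Measure Y) [∀ i, IsProbabilityMeasure (μ i)]
    (hintΦ : ∀ i, Integrable (fun y => Φ (xs i, y)) (μ i)) (hintY : ∀ i, Integrable φY (μ i)) :
    ‖∑ i, ((∫ y, Φ (xs i, y) ∂(μ i)) - Φ (xs i, ys i))‖ ^ 2 =
      ∑ i, ‖(∫ y, φY y ∂(μ i)) - φY (ys i)‖ ^ 2 := by
  simp_rw [← integral_sub_const_of_isProbabilityMeasure (hintΦ _),
    ← integral_sub_const_of_isProbabilityMeasure (hintY _)]
  have centred_Φ i : Integrable (fun y => Φ (xs i, y) - Φ (xs i, ys i)) (μ i) :=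
    (hintΦ i).sub (integrable_const _)
  have centred_φY i : Integrable (fun y => φY y - φY (ys i)) (μ i) :=
    (hintY i).sub (integrable_const _)
  have inner_eq i j := inner_integral_integral_eq_mul_of_inner_eq_mul (centred_Φ i)
    (centred_Φ j) (centred_φY i) (centred_φY j)
    (inner_sub_sub_of_inner_eq_indicator_mul hker (xs i) (xs j) · (ys i) · (ys j))
  rw [norm_sum_sq_eq_sum_norm_sq_of_pairwise_inner_eq_zero fun i j hij => by
    simp [inner_eq i j, hxs.ne hij]]
  refine Finset.sum_congr rfl fun i _ => ?_
  simpa [real_inner_self_eq_norm_sq] using inner_eq i i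

theorem regression_mmd_mixture_decomposition {X Y : Type*} [DecidableEq X] [MeasurableSpace Y]
    {H HY : Type*}
    [NormedAddCommGroup H] [InnerProductSpace ℝ H] [CompleteSpace H]
    [NormedAddCommGroup HY] [InnerProductSpace ℝ HY] [CompleteSpace HY]
    {Θ : Type*}
    (Φ : X × Y → H) (φY : Y → HY)
    (hker : ∀ x x' y y',
      ⟪Φ (x, y), Φ (x', y')⟫ = (if x = x' then (1 : ℝ) else 0) * ⟪φY y, φY y'⟫)
    (n : ℕ) (hn : 0 < n)
    (Xs : Fin n → X) (hdistinct : Function.Injective Xs)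
    (Ys : Fin n → Y)
    (P : Θ → Fin n → Measure Y) [∀ θ i, IsProbabilityMeasure (P θ i)]
    (hintΦ : ∀ θ i, Integrable (fun y => Φ (Xs i, y)) (P θ i))
    (hintY : ∀ θ i, Integrable φY (P θ i)) :
    (∀ θ : Θ,
      ‖(n : ℝ)⁻¹ • ∑ i, ((∫ y, Φ (Xs i, y) ∂(P θ i)) - Φ (Xs i, Ys i))‖ ^ 2 =
        (1 / (n : ℝ) ^ 2) * ∑ i, ‖(∫ y, φY y ∂(P θ i)) - φY (Ys i)‖ ^ 2) ∧
    (∀ θ₀ : Θ,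
      (∀ θ, ‖(n : ℝ)⁻¹ • ∑ i, ((∫ y, Φ (Xs i, y) ∂(P θ₀ i)) - Φ (Xs i, Ys i))‖ ≤
            ‖(n : ℝ)⁻¹ • ∑ i, ((∫ y, Φ (Xs i, y) ∂(P θ i)) - Φ (Xs i, Ys i))‖) ↔
      (∀ θ, (n : ℝ)⁻¹ * ∑ i, ‖(∫ y, φY y ∂(P θ₀ i)) - φY (Ys i)‖ ^ 2 ≤
            (n : ℝ)⁻¹ * ∑ i, ‖(∫ y, φY y ∂(P θ i)) - φY (Ys i)‖ ^ 2)) := by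
  have hn' : (0 : ℝ) < n := Nat.cast_pos.mpr hn
  have decomposition θ :
      ‖(n : ℝ)⁻¹ • ∑ i, ((∫ y, Φ (Xs i, y) ∂(P θ i)) - Φ (Xs i, Ys i))‖ ^ 2 =
        (1 / (n : ℝ) ^ 2) * ∑ i, ‖(∫ y, φY y ∂(P θ i)) - φY (Ys i)‖ ^ 2 := by
    rw [norm_smul, mul_pow, norm_sum_integral_sub_sq_of_inner_eq_indicator_mul hker hdistinct Ys
      (P θ) (hintΦ θ) (hintY θ), Real.norm_of_nonneg (inv_nonneg.mpr hn'.le), inv_pow, one_div]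
  refine ⟨decomposition, fun θ₀ => forall_congr' fun θ => ?_⟩
  rw [← pow_le_pow_iff_left₀ (norm_nonneg _) (norm_nonneg _) two_ne_zero, decomposition,
    decomposition, mul_le_mul_iff_right₀ (by positivity), mul_le_mul_iff_right₀ (inv_pos.mpr hn')]
end
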